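/- arXiv:0711.3915 — 3 statements merged into one kernel-verified Lean document; each statement's English description precedes it below -/
import Mathlib

section
/- (Convergence rate of the mean state in A-ND.) Let L̄ be an N×N symmetric positive semidefinite matrix with L̄𝟏 = 0 and 0 < λ₂(L̄) ≤ … ≤ λ_N(L̄), and let m(i) ∈ ℝ^N satisfy m(i+1) = (I − α(i)L̄)m(i) with 0 < α(i) ≤ 2/(λ₂(L̄) + λ_N(L̄)) for all i. Let r = (1/N)𝟏ᵀm(0). Then for every i, ‖m(i) − r𝟏‖ ≤ ( ∏_{0≤j≤i−1} (1 − α(j)λ₂(L̄)) ) ‖m(0) − r𝟏‖ ≤ exp( −λ₂(L̄) Σ_{0≤j≤i−1} α(j) ) ‖m(0) − r𝟏‖. -/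
open MeasureTheory Filter Matrix

/-- Second-smallest eigenvalue (algebraic connectivity) via Courant–Fischer. -/
noncomputable def lambda2 {N : ℕ} (L : Matrix (Fin N) (Fin N) ℝ) : ℝ :=
  sInf {r | ∃ x : Fin N → ℝ, (∑ i, (x i) ^ 2) = 1 ∧ (∑ i, x i) = 0 ∧ r = x ⬝ᵥ L.mulVec x}

/-- Largest eigenvalue via the Rayleigh quotient. -/
noncomputable def lambdaN {N : ℕ} (L : Matrix (Fin N) (Fin N) ℝ) : ℝ :=
  sSup {r | ∃ x : Fin N → ℝ, (∑ i, (x i) ^ 2) = 1 ∧ r = x ⬝ᵥ L.mulVec x}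

/-!
The error `e(i) = m(i) − r𝟏` has coordinate sum zero for every `i` (because `𝟏ᵀL̄ = 0`) and
satisfies `e(i+1) = (I − α(i)L̄) e(i)`. On the sum-zero subspace, which `I − aL̄` preserves, the
Rayleigh quotient of `L̄` lies in `[λ₂, λ_N]`, so that of `I − aL̄` lies in `[1 − aλ_N, 1 − aλ₂]`,
and the step-size bound `a(λ₂ + λ_N) ≤ 2` puts both ends within `1 − aλ₂` of zero. For a
symmetric operator, a bound on the quadratic form over an invariant subspace bounds the norm
there, so each step contracts the error by the factor `1 − α(i)λ₂`. Finally `1 − x ≤ e^{−x}`.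
-/

open Finset

theorem le_prod_range_mul_of_le_mul {d c : ℕ → ℝ} (hc : ∀ i, 0 ≤ c i)
    (hd : ∀ i, d (i + 1) ≤ c i * d i) (i : ℕ) : d i ≤ (∏ j ∈ range i, c j) * d 0 := by
  induction i with
  | zero => simp
  | succ i ih =>
    calc d (i + 1) ≤ c i * d i := hd i
      _ ≤ c i * ((∏ j ∈ range i, c j) * d 0) := mul_le_mul_of_nonneg_left ih (hc i)
      _ = (∏ j ∈ range (i + 1), c j) * d 0 := by rw [prod_range_succ]; ring

theorem prod_one_sub_le_exp_neg_sum {ι : Type*} {s : Finset ι} {x : ι → ℝ}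
    (hx : ∀ i ∈ s, x i ≤ 1) : ∏ i ∈ s, (1 - x i) ≤ Real.exp (-∑ i ∈ s, x i) :=
  calc ∏ i ∈ s, (1 - x i) ≤ ∏ i ∈ s, Real.exp (-x i) :=
        prod_le_prod (fun i hi => sub_nonneg.2 (hx i hi)) fun i _ => Real.one_sub_le_exp_neg _
    _ = Real.exp (-∑ i ∈ s, x i) := by rw [← Real.exp_sum, sum_neg_distrib]

section Vectors

variable {n : Type*} [Fintype n]

theorem dotProduct_self_eq_sum_sq (x : n → ℝ) : x ⬝ᵥ x = ∑ i, x i ^ 2 := by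
  simp only [dotProduct, sq]

theorem dotProduct_self_nonneg (x : n → ℝ) : 0 ≤ x ⬝ᵥ x := by
  simpa using dotProduct_star_self_nonneg x

theorem dotProduct_self_pos {x : n → ℝ} (hx : x ≠ 0) : 0 < x ⬝ᵥ x :=
  (dotProduct_self_nonneg x).lt_of_ne' (dotProduct_self_eq_zero.not.2 hx)

theorem mulVec_dotProduct_mulVec_le_of_abs_dotProduct_mulVec_le {S : Matrix n n ℝ}
    (hS : S.IsSymm) {V : Submodule ℝ (n → ℝ)} (hSV : ∀ x ∈ V, S *ᵥ x ∈ V) {M : ℝ}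
    (hM : ∀ z ∈ V, |z ⬝ᵥ S *ᵥ z| ≤ M * (z ⬝ᵥ z)) {x : n → ℝ} (hx : x ∈ V) :
    S *ᵥ x ⬝ᵥ S *ᵥ x ≤ M ^ 2 * (x ⬝ᵥ x) := by
  set u := S *ᵥ x ⬝ᵥ S *ᵥ x
  have hx_nonneg := dotProduct_self_nonneg x
  have hu_nonneg : 0 ≤ u := dotProduct_self_nonneg _
  have hSS : x ⬝ᵥ S *ᵥ (S *ᵥ x) = u := by
    rw [dotProduct_mulVec, ← mulVec_transpose, hS]
  -- polarization: with `Q z = z ⬝ᵥ S *ᵥ z`, `Q (x + t • S x) - Q (x - t • S x) = 4 t u`;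
  -- then take `t = M⁻¹`
  have hpol : ∀ t : ℝ, 2 * t * u ≤ M * (x ⬝ᵥ x + t ^ 2 * u) := by
    intro t
    have hSx : t • S *ᵥ x ∈ V := V.smul_mem t (hSV x hx)
    have hplus := (abs_le.1 (hM _ (V.add_mem hx hSx))).2
    have hminus := (abs_le.1 (hM _ (V.sub_mem hx hSx))).1
    simp only [mulVec_add, mulVec_sub, mulVec_smul, add_dotProduct, dotProduct_add,
      sub_dotProduct, dotProduct_sub, smul_dotProduct, dotProduct_smul, smul_eq_mul, hSS,
      dotProduct_comm (S *ᵥ x) x] at hplus hminus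
    nlinarith
  rcases hu_nonneg.eq_or_lt with hu | hu
  · rw [← hu]; positivity
  · have hM_pos : 0 < M := by nlinarith [hpol 1]
    have := hpol M⁻¹
    field_simp at this
    nlinarith

theorem isBounded_image_dotProduct_mulVec_setOf_sum_sq_eq_one (L : Matrix n n ℝ) :
    Bornology.IsBounded ((fun x => x ⬝ᵥ L *ᵥ x) '' {x : n → ℝ | ∑ i, x i ^ 2 = 1}) := by
  have hball : {x : n → ℝ | ∑ i, x i ^ 2 = 1} ⊆ Metric.closedBall 0 1 := by
    intro x hx
    rw [mem_closedBall_zero_iff, pi_norm_le_iff_of_nonneg zero_le_one]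
    intro i
    rw [Real.norm_eq_abs, ← sq_le_one_iff_abs_le_one]
    exact hx ▸ single_le_sum (fun j _ => sq_nonneg (x j)) (mem_univ i)
  have hcompact : IsCompact {x : n → ℝ | ∑ i, x i ^ 2 = 1} :=
    Metric.isCompact_of_isClosed_isBounded (isClosed_eq (by fun_prop) continuous_const)
      (Metric.isBounded_closedBall.subset hball)
  exact (hcompact.image (by fun_prop)).isBounded

theorem sum_sq_inv_sqrt_smul_eq_one {x : n → ℝ} (hx : x ≠ 0) :
    ∑ i, ((√(x ⬝ᵥ x))⁻¹ • x) i ^ 2 = 1 := by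
  have hpos := dotProduct_self_pos hx
  simp only [Pi.smul_apply, smul_eq_mul, mul_pow, ← mul_sum, ← dotProduct_self_eq_sum_sq,
    inv_pow, Real.sq_sqrt hpos.le, inv_mul_cancel₀ hpos.ne']

theorem dotProduct_mulVec_inv_sqrt_smul (L : Matrix n n ℝ) (x : n → ℝ) :
    ((√(x ⬝ᵥ x))⁻¹ • x) ⬝ᵥ L *ᵥ ((√(x ⬝ᵥ x))⁻¹ • x) = x ⬝ᵥ L *ᵥ x / (x ⬝ᵥ x) := by
  rw [mulVec_smul, smul_dotProduct, dotProduct_smul, smul_eq_mul, smul_eq_mul, ← mul_assoc,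
    ← mul_inv, Real.mul_self_sqrt (dotProduct_self_nonneg x), inv_mul_eq_div]

variable (n) in
def sumZero : Submodule ℝ (n → ℝ) where
  carrier := {x | ∑ i, x i = 0}
  add_mem' := by intros; simp_all [sum_add_distrib]
  zero_mem' := by simp
  smul_mem' := by intros; simp_all [← mul_sum]

theorem sub_average_mem_sumZero (x : n → ℝ) :
    (fun i => x i - (∑ j, x j) / Fintype.card n) ∈ sumZero n := by
  change ∑ i, (x i - (∑ j, x j) / Fintype.card n) = 0
  rcases isEmpty_or_nonempty n with hn | hn
  · simp
  · rw [sum_sub_distrib, sum_const, card_univ, nsmul_eq_mul,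
      mul_div_cancel₀ _ (Nat.cast_ne_zero.2 Fintype.card_ne_zero), sub_self]

theorem mulVec_mem_sumZero {L : Matrix n n ℝ} (hL : L.IsSymm) (h1 : L *ᵥ 1 = 0) (x : n → ℝ) :
    L *ᵥ x ∈ sumZero n := by
  change ∑ i, (L *ᵥ x) i = 0
  rw [← one_dotProduct, dotProduct_mulVec, ← mulVec_transpose, hL, h1, zero_dotProduct]

theorem one_sub_smul_mulVec_mem_sumZero [DecidableEq n] {L : Matrix n n ℝ} (hL : L.IsSymm)
    (h1 : L *ᵥ 1 = 0) (a : ℝ) {x : n → ℝ} (hx : x ∈ sumZero n) : (1 - a • L) *ᵥ x ∈ sumZero n := by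
  rw [sub_mulVec, one_mulVec, smul_mulVec]
  exact (sumZero n).sub_mem hx ((sumZero n).smul_mem a (mulVec_mem_sumZero hL h1 x))

end Vectors

section Eigenvalues

variable {N : ℕ} (L : Matrix (Fin N) (Fin N) ℝ)

theorem lambda2_le_dotProduct_mulVec {x : Fin N → ℝ} (hx1 : ∑ i, x i ^ 2 = 1)
    (hx0 : ∑ i, x i = 0) : lambda2 L ≤ x ⬝ᵥ L *ᵥ x :=
  csInf_le ((isBounded_image_dotProduct_mulVec_setOf_sum_sq_eq_one L).bddBelow.mono
    (by rintro _ ⟨y, hy1, -, rfl⟩; exact ⟨y, hy1, rfl⟩)) ⟨x, hx1, hx0, rfl⟩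

theorem dotProduct_mulVec_le_lambdaN {x : Fin N → ℝ} (hx1 : ∑ i, x i ^ 2 = 1) :
    x ⬝ᵥ L *ᵥ x ≤ lambdaN L :=
  le_csSup ((isBounded_image_dotProduct_mulVec_setOf_sum_sq_eq_one L).bddAbove.mono
    (by rintro _ ⟨y, hy1, rfl⟩; exact ⟨y, hy1, rfl⟩)) ⟨x, hx1, rfl⟩

theorem lambda2_mul_dotProduct_self_le {x : Fin N → ℝ} (hx0 : ∑ i, x i = 0) :
    lambda2 L * (x ⬝ᵥ x) ≤ x ⬝ᵥ L *ᵥ x := by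
  rcases eq_or_ne x 0 with rfl | hx
  · simp
  have h := lambda2_le_dotProduct_mulVec L (sum_sq_inv_sqrt_smul_eq_one hx)
    (by simp only [Pi.smul_apply, smul_eq_mul, ← mul_sum, hx0, mul_zero])
  rwa [dotProduct_mulVec_inv_sqrt_smul, le_div_iff₀ (dotProduct_self_pos hx)] at h

theorem dotProduct_mulVec_le_lambdaN_mul (x : Fin N → ℝ) :
    x ⬝ᵥ L *ᵥ x ≤ lambdaN L * (x ⬝ᵥ x) := by
  rcases eq_or_ne x 0 with rfl | hx
  · simp
  have h := dotProduct_mulVec_le_lambdaN L (sum_sq_inv_sqrt_smul_eq_one hx)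
  rwa [dotProduct_mulVec_inv_sqrt_smul, div_le_iff₀ (dotProduct_self_pos hx)] at h

theorem lambda2_le_lambdaN (h : lambda2 L ≠ 0) : lambda2 L ≤ lambdaN L := by
  obtain ⟨_, x, hx1, hx0, rfl⟩ :
      {r | ∃ x : Fin N → ℝ, ∑ i, x i ^ 2 = 1 ∧ ∑ i, x i = 0 ∧ r = x ⬝ᵥ L *ᵥ x}.Nonempty :=
    Set.nonempty_iff_ne_empty.2 fun he => h (by rw [lambda2, he, Real.sInf_empty])
  exact (lambda2_le_dotProduct_mulVec L hx1 hx0).trans (dotProduct_mulVec_le_lambdaN L hx1)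

end Eigenvalues

section StepSize

variable {N : ℕ} {L : Matrix (Fin N) (Fin N) ℝ} {a : ℝ}

theorem mul_lambda2_add_lambdaN_le_two (hlam2 : 0 < lambda2 L)
    (hale : a ≤ 2 / (lambda2 L + lambdaN L)) : a * (lambda2 L + lambdaN L) ≤ 2 :=
  (le_div_iff₀ (by linarith [lambda2_le_lambdaN L hlam2.ne'])).1 hale

theorem mul_lambda2_le_one (hlam2 : 0 < lambda2 L) (ha : 0 ≤ a)
    (hale : a ≤ 2 / (lambda2 L + lambdaN L)) : a * lambda2 L ≤ 1 := by
  nlinarith [mul_lambda2_add_lambdaN_le_two hlam2 hale, lambda2_le_lambdaN L hlam2.ne']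

theorem abs_dotProduct_one_sub_smul_mulVec_le (hlam2 : 0 < lambda2 L) (ha : 0 ≤ a)
    (hale : a ≤ 2 / (lambda2 L + lambdaN L)) {z : Fin N → ℝ} (hz : z ∈ sumZero (Fin N)) :
    |z ⬝ᵥ (1 - a • L) *ᵥ z| ≤ (1 - a * lambda2 L) * (z ⬝ᵥ z) := by
  have hlow := lambda2_mul_dotProduct_self_le L hz
  have hup := dotProduct_mulVec_le_lambdaN_mul L z
  have hstep := mul_lambda2_add_lambdaN_le_two hlam2 hale
  have hz2 := dotProduct_self_nonneg z
  rw [sub_mulVec, one_mulVec, smul_mulVec, dotProduct_sub, dotProduct_smul, smul_eq_mul, abs_le]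
  constructor
  · nlinarith [mul_le_mul_of_nonneg_left hup ha, mul_nonneg (sub_nonneg.2 hstep) hz2]
  · nlinarith [mul_le_mul_of_nonneg_left hlow ha]

theorem sqrt_sum_sq_one_sub_smul_mulVec_le (hL : L.IsSymm) (h1 : L *ᵥ 1 = 0)
    (hlam2 : 0 < lambda2 L) (ha : 0 ≤ a) (hale : a ≤ 2 / (lambda2 L + lambdaN L))
    {y : Fin N → ℝ} (hy : y ∈ sumZero (Fin N)) :
    √(∑ l, ((1 - a • L) *ᵥ y) l ^ 2) ≤ (1 - a * lambda2 L) * √(∑ l, y l ^ 2) := by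
  have h := mulVec_dotProduct_mulVec_le_of_abs_dotProduct_mulVec_le
    (isSymm_one.sub (hL.smul a)) (fun x hx => one_sub_smul_mulVec_mem_sumZero hL h1 a hx)
    (fun z hz => abs_dotProduct_one_sub_smul_mulVec_le hlam2 ha hale hz) hy
  rw [dotProduct_self_eq_sum_sq, dotProduct_self_eq_sum_sq] at h
  rw [← Real.sqrt_sq (sub_nonneg.2 (mul_lambda2_le_one hlam2 ha hale)),
    ← Real.sqrt_mul (sq_nonneg _)]
  exact Real.sqrt_le_sqrt h

end StepSize

theorem AND_mean_state_convergence_rate_general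
    {N : ℕ}
    (Lbar : Matrix (Fin N) (Fin N) ℝ) (hsymm : Lbar.IsSymm)
    (hone : Lbar.mulVec (fun _ => 1) = 0)
    (hlam2 : 0 < lambda2 Lbar)
    (α : ℕ → ℝ) (hα : ∀ i, 0 < α i)
    (hαle : ∀ i, α i ≤ 2 / (lambda2 Lbar + lambdaN Lbar))
    (m : ℕ → Fin N → ℝ)
    (hrec : ∀ i, m (i + 1) = m i - α i • Lbar.mulVec (m i))
    (r : ℝ) (hr : r = (∑ l, m 0 l) / N) :
    ∀ i : ℕ,
      Real.sqrt (∑ l, (m i l - r) ^ 2)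
          ≤ (∏ j ∈ Finset.range i, (1 - α j * lambda2 Lbar))
              * Real.sqrt (∑ l, (m 0 l - r) ^ 2)
      ∧ (∏ j ∈ Finset.range i, (1 - α j * lambda2 Lbar))
              * Real.sqrt (∑ l, (m 0 l - r) ^ 2)
          ≤ Real.exp (- lambda2 Lbar * ∑ j ∈ Finset.range i, α j)
              * Real.sqrt (∑ l, (m 0 l - r) ^ 2) := by
  set e : ℕ → Fin N → ℝ := fun i l => m i l - r
  have he_succ : ∀ i, e (i + 1) = (1 - α i • Lbar) *ᵥ e i := by
    intro i
    have hLe : Lbar *ᵥ e i = Lbar *ᵥ m i := by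
      rw [show e i = m i - r • 1 by ext; simp [e], mulVec_sub, mulVec_smul]
      simp [show Lbar *ᵥ 1 = 0 from hone]
    rw [sub_mulVec, one_mulVec, smul_mulVec, hLe]
    ext l
    simp only [hrec, Pi.sub_apply, Pi.smul_apply, smul_eq_mul, e]
    ring
  have he_mem : ∀ i, e i ∈ sumZero (Fin N) := by
    intro i
    induction i with
    | zero => simpa [e, hr] using sub_average_mem_sumZero (m 0)
    | succ i ih => exact he_succ i ▸ one_sub_smul_mulVec_mem_sumZero hsymm hone (α i) ih
  have hfactor : ∀ j, α j * lambda2 Lbar ≤ 1 := fun j =>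
    mul_lambda2_le_one hlam2 (hα j).le (hαle j)
  intro i
  refine ⟨le_prod_range_mul_of_le_mul (d := fun i => √(∑ l, e i l ^ 2))
    (fun j => sub_nonneg.2 (hfactor j)) (fun j => ?_) i,
    mul_le_mul_of_nonneg_right ?_ (Real.sqrt_nonneg _)⟩
  · exact he_succ j ▸
      sqrt_sum_sq_one_sub_smul_mulVec_le hsymm hone hlam2 (hα j).le (hαle j) (he_mem j)
  · calc ∏ j ∈ range i, (1 - α j * lambda2 Lbar)
        ≤ Real.exp (-∑ j ∈ range i, α j * lambda2 Lbar) :=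
          prod_one_sub_le_exp_neg_sum fun j _ => hfactor j
      _ = Real.exp (-lambda2 Lbar * ∑ j ∈ range i, α j) := by
          congr 1
          rw [← sum_mul]
          ring

/-- Convergence rate of the mean state in A-ND: for the deterministic recursion
`m(i+1) = (I − α(i)L̄)m(i)` with `0 < α(i) ≤ 2/(λ₂(L̄)+λ_N(L̄))`,
`‖m(i) − r𝟏‖ ≤ (∏_{j<i}(1 − α(j)λ₂(L̄)))‖m(0) − r𝟏‖
  ≤ exp(−λ₂(L̄)Σ_{j<i}α(j))‖m(0) − r𝟏‖`. -/
theorem AND_mean_state_convergence_rate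
    {N : ℕ} (hN : 0 < N)
    (Lbar : Matrix (Fin N) (Fin N) ℝ) (hsymm : Lbar.IsSymm)
    (hpsd : ∀ y : Fin N → ℝ, 0 ≤ y ⬝ᵥ Lbar.mulVec y)
    (hone : Lbar.mulVec (fun _ => 1) = 0)
    (hlam2 : 0 < lambda2 Lbar)
    (α : ℕ → ℝ) (hα : ∀ i, 0 < α i)
    (hαle : ∀ i, α i ≤ 2 / (lambda2 Lbar + lambdaN Lbar))
    (m : ℕ → Fin N → ℝ)
    (hrec : ∀ i, m (i + 1) = m i - α i • Lbar.mulVec (m i))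
    (r : ℝ) (hr : r = (∑ l, m 0 l) / N) :
    ∀ i : ℕ,
      Real.sqrt (∑ l, (m i l - r) ^ 2)
          ≤ (∏ j ∈ Finset.range i, (1 - α j * lambda2 Lbar))
              * Real.sqrt (∑ l, (m 0 l - r) ^ 2)
      ∧ (∏ j ∈ Finset.range i, (1 - α j * lambda2 Lbar))
              * Real.sqrt (∑ l, (m 0 l - r) ^ 2)
          ≤ Real.exp (- lambda2 Lbar * ∑ j ∈ Finset.range i, α j)
              * Real.sqrt (∑ l, (m 0 l - r) ^ 2) :=
  AND_mean_state_convergence_rate_general Lbar hsymm hone hlam2 α hα hαle m hrec r hr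
end

section
/- (Monotonicity of the approximate averaging time.) Fix N ≥ 1, K > 0, φ_max > 0, and 0 < ε, δ < 1. Define, for 0 < γ₂ < 1, T̂^{γ₂}(ε,δ) = ( ln(ε/2)/ln γ₂ + 1 ) [ (4φ_max² ln(2/δ)/(Kε)) ( ln(ε/2)/(N ln γ₂) + 1/N + ((1 − γ₂²ε²/4)/(1 − γ₂²))(1 − 1/N) ) + 1 ]. Then T̂^{γ₂}(ε,δ) is an increasing function of γ₂ on the interval 0 < γ₂ < 1. -/
/-!
Write `T̂(γ) = (A(γ) + 1) · (C · S(γ) + 1)` with `A(γ) = ln(ε/2) / ln γ`, `C ≥ 0` the constant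
prefactor and `S(γ) = A(γ)/N + 1/N + B(γ)(1 − 1/N)`, `B(γ) = (1 − γ²ε²/4)/(1 − γ²)`.
On `(0, 1)` the first factor is positive and strictly increasing (`ln γ` increases through
negative values), and the second is at least `1` and increasing, because
`B(γ) = c + (1 − c)/(1 − γ²)` with `c = ε²/4 < 1`. A strictly increasing positive function
times an increasing positive one is strictly increasing.
-/

open Set

lemma StrictMonoOn.mul_monotoneOn {α M₀ : Type*} [Mul M₀] [Zero M₀] [Preorder M₀] [Preorder α]
    [PosMulMono M₀] [MulPosStrictMono M₀] {f g : α → M₀} {s : Set α} (hf : StrictMonoOn f s)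
    (hg : MonotoneOn g s) (hf₀ : ∀ x ∈ s, 0 ≤ f x) (hg₀ : ∀ x ∈ s, 0 < g x) :
    StrictMonoOn (f * g) s :=
  fun _ ha _ hb h ↦ mul_lt_mul (hf ha hb h) (hg ha hb h.le) (hg₀ _ ha) (hf₀ _ hb)

lemma strictMonoOn_div_log {a : ℝ} (ha : a < 0) :
    StrictMonoOn (fun x ↦ a / Real.log x) (Ioo 0 1) := by
  intro x ⟨hx₀, hx₁⟩ y ⟨_, hy₁⟩ hxy
  have hlog : Real.log x < Real.log y := Real.log_lt_log hx₀ hxy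
  dsimp only
  rw [← neg_div_neg_eq a, ← neg_div_neg_eq a]
  exact div_lt_div_of_pos_left (neg_pos.2 ha) (neg_pos.2 (Real.log_neg (hx₀.trans hxy) hy₁))
    (neg_lt_neg hlog)

lemma monotoneOn_one_sub_sq_mul_div_one_sub_sq {c : ℝ} (hc : c ≤ 1) :
    MonotoneOn (fun x ↦ (1 - x ^ 2 * c) / (1 - x ^ 2)) (Ico 0 1) := by
  intro x ⟨hx₀, hx₁⟩ y ⟨_, hy₁⟩ hxy
  have hx : x ^ 2 < 1 := by nlinarith
  have hy : y ^ 2 < 1 := by nlinarith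
  have hsq : x ^ 2 ≤ y ^ 2 := by nlinarith
  rw [div_le_div_iff₀ (by linarith) (by linarith)]
  nlinarith [mul_nonneg (sub_nonneg.2 hsq) (sub_nonneg.2 hc)]

lemma one_sub_sq_mul_div_one_sub_sq_nonneg {c x : ℝ} (hc : c ≤ 1) (hx : x ^ 2 < 1) :
    0 ≤ (1 - x ^ 2 * c) / (1 - x ^ 2) := by
  apply div_nonneg _ (by linarith)
  rcases le_total c 0 with hc₀ | hc₀ <;> nlinarith

theorem approx_averaging_time_monotone_general
    (N : ℕ) (K φmax ε δ : ℝ)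
    (hK : 0 < K)
    (hε : 0 < ε) (hε1 : ε < 1) (hδ : 0 < δ) (hδ1 : δ < 1) :
    StrictMonoOn (fun γ2 : ℝ =>
      (Real.log (ε / 2) / Real.log γ2 + 1) *
        ((4 * φmax ^ 2 * Real.log (2 / δ) / (K * ε)) *
          (Real.log (ε / 2) / (N * Real.log γ2) + 1 / (N : ℝ)
            + ((1 - γ2 ^ 2 * ε ^ 2 / 4) / (1 - γ2 ^ 2)) * (1 - 1 / (N : ℝ))) + 1))
      (Set.Ioo (0 : ℝ) 1) := by
  have hL : Real.log (ε / 2) < 0 := Real.log_neg (by linarith) (by linarith)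
  have hc : ε ^ 2 / 4 ≤ 1 := by nlinarith
  have hC : 0 ≤ 4 * φmax ^ 2 * Real.log (2 / δ) / (K * ε) := by
    have : 0 ≤ Real.log (2 / δ) := Real.log_nonneg (by rw [le_div_iff₀ hδ]; linarith)
    positivity
  have hN₁ : 0 ≤ 1 - 1 / (N : ℝ) := Nat.one_sub_one_div_cast_nonneg N
  have hA := strictMonoOn_div_log hL
  have hB : MonotoneOn (fun γ : ℝ ↦ (1 - γ ^ 2 * ε ^ 2 / 4) / (1 - γ ^ 2)) (Ioo 0 1) := by
    simpa only [mul_div_assoc] using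
      (monotoneOn_one_sub_sq_mul_div_one_sub_sq hc).mono Ioo_subset_Ico_self
  refine (hA.add_const 1).mul_monotoneOn ?_ ?_ ?_
  · intro x hx y hy hxy
    dsimp only
    rw [div_mul_eq_div_div_swap _ (N : ℝ), div_mul_eq_div_div_swap _ (N : ℝ)]
    gcongr _ * (?_ / _ + _ + ?_ * _) + 1
    · exact hA.monotoneOn hx hy hxy
    · exact hB hx hy hxy
  · intro x ⟨hx₀, hx₁⟩
    have := div_pos_of_neg_of_neg hL (Real.log_neg hx₀ hx₁)
    positivity
  · intro x ⟨hx₀, hx₁⟩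
    have hA₀ : 0 ≤ Real.log (ε / 2) / (N * Real.log x) := div_nonneg_of_nonpos hL.le
      (mul_nonpos_of_nonneg_of_nonpos N.cast_nonneg (Real.log_neg hx₀ hx₁).le)
    have hB₀ := one_sub_sq_mul_div_one_sub_sq_nonneg hc (by nlinarith : x ^ 2 < 1)
    rw [← mul_div_assoc] at hB₀
    positivity

/-- Monotonicity of the approximate averaging time: for fixed `N ≥ 1`, `K > 0`,
`φ_max > 0`, and `0 < ε, δ < 1`, the map
`γ₂ ↦ T̂^{γ₂}(ε,δ) = (ln(ε/2)/ln γ₂ + 1)[(4φ_max²ln(2/δ)/(Kε))(ln(ε/2)/(N ln γ₂)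
  + 1/N + ((1 − γ₂²ε²/4)/(1 − γ₂²))(1 − 1/N)) + 1]`
is increasing on the interval `0 < γ₂ < 1`. -/
theorem approx_averaging_time_monotone
    (N : ℕ) (hN : 1 ≤ N) (K φmax ε δ : ℝ)
    (hK : 0 < K) (hφmax : 0 < φmax)
    (hε : 0 < ε) (hε1 : ε < 1) (hδ : 0 < δ) (hδ1 : δ < 1) :
    StrictMonoOn (fun γ2 : ℝ =>
      (Real.log (ε / 2) / Real.log γ2 + 1) *
        ((4 * φmax ^ 2 * Real.log (2 / δ) / (K * ε)) *
          (Real.log (ε / 2) / (N * Real.log γ2) + 1 / (N : ℝ)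
            + ((1 - γ2 ^ 2 * ε ^ 2 / 4) / (1 - γ2 ^ 2)) * (1 - 1 / (N : ℝ))) + 1))
      (Set.Ioo (0 : ℝ) 1) :=
  approx_averaging_time_monotone_general N K φmax ε δ hK hε hε1 hδ hδ1
end

section
/- (Realizability of A-NC.) Let L be the Laplacian of a fixed connected simple undirected graph on N vertices (so λ₂(L) > 0), let the noise {v^p_{nl}(i)} be independent zero-mean Gaussian with variances bounded by μ < ∞, and consider the A-NC iterations x^p(i+1) = x^p(i) − α(Lx^p(i) + n^p(i)) with estimate x̄_l^{p̂}(î) = (1/p̂)Σ_{p=1}^{p̂} x_l^p(î). Then for every constant link weight α with 0 < α < 2/λ_N(L) and every 0 < ε, δ < 1, the averaging time T^α(ε,δ) — the minimum of îp̂ over pairs (î,p̂) such that P(|x̄_l^{p̂}(î) − r|/K ≤ ε) ≥ 1 − δ uniformly over initial states with ‖x(0) − r𝟏‖ ≤ K and over coordinates l — is finite; i.e., (ε,δ)-consensus is achievable. -/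
/-!
The iteration matrix `M = 1 - αL` fixes the consensus direction `𝟏`. Since `L` is positive
semidefinite with `⟪y, L y⟫ ≤ λ_N ‖y‖²` and, the graph being connected, has kernel `span 𝟏`,
`M` strictly shrinks every nonzero vector of `𝟏ᗮ` when `0 < α < 2 / λ_N`; compactness of the
unit sphere makes the contraction factor `ρ < 1` uniform. Hence the deterministic part
`M^î x(0)` is within `ρ^î K ≤ Kε/2` of `r𝟏`. The noise part of each run is a fixed linear
combination of the independent centred Gaussians `v^p_{mk}(j)`, so by Chebyshev the average of
`p̂` runs deviates by `Kε/2` with probability `O(1/p̂)`, which is at most `δ` for `p̂` large.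
-/

open MeasureTheory ProbabilityTheory Filter Matrix

open scoped RealInnerProductSpace

section Contraction

variable {E : Type*} [NormedAddCommGroup E]

theorem exists_lt_one_forall_norm_le_of_norm_lt [NormedSpace ℝ E] [FiniteDimensional ℝ E]
    (f : E →L[ℝ] E) (S : Submodule ℝ E) (hf : ∀ w ∈ S, w ≠ 0 → ‖f w‖ < ‖w‖) :
    ∃ ρ, 0 ≤ ρ ∧ ρ < 1 ∧ ∀ w ∈ S, ‖f w‖ ≤ ρ * ‖w‖ := by
  have hunit : ∀ w ∈ S, w ≠ 0 → ‖w‖⁻¹ • w ∈ Metric.sphere 0 1 ∩ S := fun w hw hw0 =>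
    ⟨mem_sphere_zero_iff_norm.2 (norm_smul_inv_norm hw0), S.smul_mem _ hw⟩
  have hscale : ∀ w, ‖f (‖w‖⁻¹ • w)‖ * ‖w‖ = ‖f w‖ := fun w => by
    rcases eq_or_ne w 0 with rfl | hw0
    · simp
    · rw [map_smul, norm_smul, norm_inv, norm_norm]
      field_simp
  rcases (Metric.sphere (0 : E) 1 ∩ S).eq_empty_or_nonempty with hempty | hne
  · refine ⟨0, le_rfl, one_pos, fun w hw => ?_⟩
    obtain rfl : w = 0 := by_contra fun hw0 => hempty.subset (hunit w hw hw0)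
    simp
  obtain ⟨u, hu, hmax⟩ := ((isCompact_sphere 0 1).inter_right S.closed_of_finiteDimensional)
    |>.exists_isMaxOn hne (continuous_norm.comp f.continuous).continuousOn
  have hu1 : ‖u‖ = 1 := mem_sphere_zero_iff_norm.1 hu.1
  refine ⟨‖f u‖, norm_nonneg _, hu1 ▸ hf u hu.2 (norm_ne_zero_iff.1 (hu1.trans_ne one_ne_zero)),
    fun w hw => ?_⟩
  rcases eq_or_ne w 0 with rfl | hw0
  · simp
  rw [← hscale w]
  exact mul_le_mul_of_nonneg_right (hmax (hunit w hw hw0)) (norm_nonneg w)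

variable [InnerProductSpace ℝ E] {T : E →L[ℝ] E} {Λ α : ℝ}

theorem ContinuousLinearMap.IsPositive.norm_apply_sq_le_mul_inner (hT : T.IsPositive) (hΛ : 0 < Λ)
    (hTΛ : ∀ y, ⟪y, T y⟫ ≤ Λ * ‖y‖ ^ 2) (w : E) : ‖T w‖ ^ 2 ≤ Λ * ⟪w, T w⟫ := by
  have hsymm : ⟪w, T (T w)⟫ = ‖T w‖ ^ 2 := by
    rw [← hT.inner_left_eq_inner_right, real_inner_self_eq_norm_sq]
  -- positivity at `w - Λ⁻¹ • T w`, together with the Rayleigh bound at `T w`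
  have hpos := hT.inner_nonneg_right (w - Λ⁻¹ • T w)
  simp only [map_sub, map_smul, inner_sub_left, inner_sub_right, real_inner_smul_left,
    real_inner_smul_right, hsymm, real_inner_self_eq_norm_sq] at hpos
  have hR := hTΛ (T w)
  field_simp at hpos
  have : Λ * ‖T w‖ ^ 2 ≤ Λ * (Λ * ⟪w, T w⟫) := by linarith
  exact le_of_mul_le_mul_left this hΛ

theorem ContinuousLinearMap.IsPositive.norm_sub_smul_apply_lt (hT : T.IsPositive) (hΛ : 0 < Λ)
    (hTΛ : ∀ y, ⟪y, T y⟫ ≤ Λ * ‖y‖ ^ 2) (hα : 0 < α) (hαΛ : α * Λ < 2) {w : E}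
    (hw : 0 < ⟪w, T w⟫) : ‖w - α • T w‖ < ‖w‖ := by
  have hsq : ‖w - α • T w‖ ^ 2 = ‖w‖ ^ 2 - 2 * α * ⟪w, T w⟫ + α ^ 2 * ‖T w‖ ^ 2 := by
    rw [norm_sub_sq_real, real_inner_smul_right, norm_smul, mul_pow, Real.norm_eq_abs, sq_abs]
    ring
  have hgain : α ^ 2 * ‖T w‖ ^ 2 < 2 * α * ⟪w, T w⟫ := calc
    α ^ 2 * ‖T w‖ ^ 2 ≤ α ^ 2 * (Λ * ⟪w, T w⟫) := by
      gcongr; exact hT.norm_apply_sq_le_mul_inner hΛ hTΛ w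
    _ = α * (α * Λ) * ⟪w, T w⟫ := by ring
    _ < α * 2 * ⟪w, T w⟫ := by gcongr
    _ = 2 * α * ⟪w, T w⟫ := by ring
  exact lt_of_pow_lt_pow_left₀ 2 (norm_nonneg w) (by linarith)

theorem ContinuousLinearMap.IsPositive.inner_apply_pos_of_mem_orthogonal_ker
    (hT : T.IsPositive) (hΛ : 0 < Λ) (hTΛ : ∀ y, ⟪y, T y⟫ ≤ Λ * ‖y‖ ^ 2) {w : E}
    (hw : w ∈ T.kerᗮ) (hw0 : w ≠ 0) : 0 < ⟪w, T w⟫ := by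
  refine (hT.inner_nonneg_right w).lt_of_ne fun h => hw0 ?_
  have hker : w ∈ T.ker := by
    have := hT.norm_apply_sq_le_mul_inner hΛ hTΛ w
    rw [← h, mul_zero] at this
    simpa using this
  exact inner_self_eq_zero.1 (Submodule.inner_right_of_mem_orthogonal hker hw)

theorem ContinuousLinearMap.IsPositive.apply_mem_orthogonal_ker (hT : T.IsPositive) (w : E) :
    T w ∈ T.kerᗮ := fun k hk => by
  rw [← hT.inner_left_eq_inner_right, show T k = 0 from hk, inner_zero_left]

theorem ContinuousLinearMap.IsPositive.exists_norm_pow_one_sub_smul_apply_le [FiniteDimensional ℝ E]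
    (hT : T.IsPositive) (hΛ : 0 < Λ) (hTΛ : ∀ y, ⟪y, T y⟫ ≤ Λ * ‖y‖ ^ 2) (hα : 0 < α)
    (hαΛ : α * Λ < 2) :
    ∃ ρ, 0 ≤ ρ ∧ ρ < 1 ∧ ∀ (i : ℕ), ∀ w ∈ T.kerᗮ,
      ‖((1 - α • T) ^ i) w‖ ≤ ρ ^ i * ‖w‖ := by
  set S := T.kerᗮ
  have hmem : ∀ (i : ℕ), ∀ w ∈ S, ((1 - α • T) ^ i) w ∈ S := by
    intro i
    induction i with
    | zero => simp
    | succ i ih =>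
      intro w hw
      rw [pow_succ', mul_apply_eq_comp]
      exact S.sub_mem (ih w hw) (S.smul_mem α (hT.apply_mem_orthogonal_ker _))
  obtain ⟨ρ, hρ0, hρ1, hρ⟩ := exists_lt_one_forall_norm_le_of_norm_lt (1 - α • T) S
    fun w hw hw0 => hT.norm_sub_smul_apply_lt hΛ hTΛ hα hαΛ
      (hT.inner_apply_pos_of_mem_orthogonal_ker hΛ hTΛ hw hw0)
  refine ⟨ρ, hρ0, hρ1, fun i => ?_⟩
  induction i with
  | zero => simp
  | succ i ih =>
    intro w hw
    rw [pow_succ', mul_apply_eq_comp, pow_succ', mul_assoc]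
    exact (hρ _ (hmem i w hw)).trans (mul_le_mul_of_nonneg_left (ih w hw) hρ0)

end Contraction

theorem inner_toEuclideanCLM_le_lambdaN {N : ℕ} (L : Matrix (Fin N) (Fin N) ℝ)
    (y : EuclideanSpace ℝ (Fin N)) : ⟪y, toEuclideanCLM (𝕜 := ℝ) L y⟫ ≤ lambdaN L * ‖y‖ ^ 2 := by
  set T := toEuclideanCLM (𝕜 := ℝ) L
  set S := {r | ∃ x : Fin N → ℝ, (∑ i, (x i) ^ 2) = 1 ∧ r = x ⬝ᵥ L.mulVec x}
  have hmem : ∀ u : EuclideanSpace ℝ (Fin N), ‖u‖ = 1 → ⟪u, T u⟫ ∈ S := fun u hu =>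
    ⟨u.ofLp, by rw [← EuclideanSpace.real_norm_sq_eq, hu, one_pow], inner_toEuclideanCLM L u u⟩
  have hbdd : BddAbove S := by
    refine ⟨‖T‖, ?_⟩
    rintro _ ⟨x, hx, rfl⟩
    set u := WithLp.toLp 2 x
    have hu : ‖u‖ = 1 := by
      rwa [← pow_eq_one_iff_of_nonneg (norm_nonneg _) two_ne_zero, EuclideanSpace.real_norm_sq_eq]
    calc x ⬝ᵥ L *ᵥ x = ⟪u, T u⟫ := (inner_toEuclideanCLM L u u).symm
      _ ≤ ‖u‖ * ‖T u‖ := real_inner_le_norm _ _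
      _ ≤ ‖u‖ * (‖T‖ * ‖u‖) := by gcongr; exact T.le_opNorm u
      _ = ‖T‖ := by rw [hu]; ring
  rcases eq_or_ne y 0 with rfl | hy
  · simp
  have hle := le_csSup hbdd (hmem _ (norm_smul_inv_norm (𝕜 := ℝ) hy))
  simp only [map_smul, real_inner_smul_left, real_inner_smul_right, RCLike.ofReal_real_eq_id,
    id] at hle
  calc ⟪y, T y⟫ = ‖y‖ ^ 2 * (‖y‖⁻¹ * (‖y‖⁻¹ * ⟪y, T y⟫)) := by field_simp
    _ ≤ ‖y‖ ^ 2 * lambdaN L := by gcongr; exact hle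
    _ = lambdaN L * ‖y‖ ^ 2 := mul_comm _ _

namespace SimpleGraph

variable {V : Type*} [Fintype V] [DecidableEq V] (G : SimpleGraph V) [DecidableRel G.Adj]

theorem lapMatrix_apply (k l : V) :
    G.lapMatrix ℝ k l = if k = l then (G.degree k : ℝ) else if G.Adj k l then -1 else 0 := by
  by_cases hkl : k = l
  · subst hkl
    simp [lapMatrix, degMatrix]
  · by_cases hadj : G.Adj k l <;> simp [lapMatrix, degMatrix, hkl, hadj]

theorem pow_one_sub_smul_lapMatrix_mulVec_const (α r : ℝ) (i : ℕ) :
    (1 - α • G.lapMatrix ℝ) ^ i *ᵥ (fun _ => r) = fun _ => r := by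
  have hL : G.lapMatrix ℝ *ᵥ (fun _ => r) = 0 :=
    (G.lapMatrix_mulVec_eq_zero_iff_forall_reachable).2 fun _ _ _ => rfl
  induction i with
  | zero => simp
  | succ i ih => rw [pow_succ', ← mulVec_mulVec, ih, sub_mulVec, smul_mulVec, hL]; simp

variable {G} in
theorem Connected.toLp_mem_orthogonal_ker_lapMatrix (hconn : G.Connected) {x : V → ℝ}
    (hx : ∑ i, x i = 0) :
    WithLp.toLp 2 x ∈ (toEuclideanCLM (𝕜 := ℝ) (G.lapMatrix ℝ)).kerᗮ := by
  intro k hk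
  have hconst : ∀ i j, k i = k j :=
    have hLk : G.lapMatrix ℝ *ᵥ k.ofLp = 0 := congrArg WithLp.ofLp hk
    fun i j => (G.lapMatrix_mulVec_eq_zero_iff_forall_reachable).1 hLk i j (hconn i j)
  obtain ⟨j⟩ := hconn.nonempty
  simp [EuclideanSpace.inner_eq_star_dotProduct, dotProduct, hconst _ j, ← Finset.sum_mul, hx]

theorem Connected.exists_abs_pow_mulVec_sub_average_le {N : ℕ} {G : SimpleGraph (Fin N)}
    [DecidableRel G.Adj] (hconn : G.Connected) {α : ℝ} (hα0 : 0 < α)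
    (hα1 : α < 2 / lambdaN (G.lapMatrix ℝ)) :
    ∃ ρ, 0 ≤ ρ ∧ ρ < 1 ∧ ∀ (i : ℕ) (x : Fin N → ℝ) (l : Fin N),
      |((1 - α • G.lapMatrix ℝ) ^ i *ᵥ x) l - (∑ j, x j) / N|
        ≤ ρ ^ i * √(∑ k, (x k - (∑ j, x j) / N) ^ 2) := by
  set L := G.lapMatrix ℝ
  set T := toEuclideanCLM (𝕜 := ℝ) L
  have hΛ : 0 < lambdaN L := (div_pos_iff_of_pos_left two_pos).1 (hα0.trans hα1)
  have hT : T.IsPositive := by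
    rw [← ContinuousLinearMap.isPositive_toLinearMap_iff, coe_toEuclideanCLM_eq_toEuclideanLin,
      isPositive_toEuclideanLin_iff]
    exact G.posSemidef_lapMatrix ℝ
  obtain ⟨ρ, hρ0, hρ1, hρ⟩ := hT.exists_norm_pow_one_sub_smul_apply_le hΛ
    (inner_toEuclideanCLM_le_lambdaN L) hα0 ((lt_div_iff₀ hΛ).1 hα1)
  refine ⟨ρ, hρ0, hρ1, fun i x l => ?_⟩
  set r := (∑ j, x j) / N
  set e : Fin N → ℝ := fun k => x k - r
  have he : ∑ k, e k = 0 := by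
    have : (N : ℝ) ≠ 0 := by exact_mod_cast l.pos.ne'
    simp [e, r, Finset.sum_sub_distrib, mul_div_cancel₀ _ this]
  have hpow : toEuclideanCLM (𝕜 := ℝ) ((1 - α • L) ^ i) = (1 - α • T) ^ i := by
    simp [T, map_pow, map_sub, map_smul]
  calc |((1 - α • L) ^ i *ᵥ x) l - r| = ‖(WithLp.toLp 2 ((1 - α • L) ^ i *ᵥ e)).ofLp l‖ := by
        rw [show x = (fun _ => r) + e by ext; simp [e], mulVec_add,
          G.pow_one_sub_smul_lapMatrix_mulVec_const]
        simp
    _ ≤ ‖WithLp.toLp 2 ((1 - α • L) ^ i *ᵥ e)‖ := PiLp.norm_apply_le _ l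
    _ = ‖((1 - α • T) ^ i) (WithLp.toLp 2 e)‖ := by rw [← hpow, toEuclideanCLM_toLp]
    _ ≤ ρ ^ i * ‖WithLp.toLp 2 e‖ := hρ i _ (hconn.toLp_mem_orthogonal_ker_lapMatrix he)
    _ = ρ ^ i * √(∑ k, (x k - r) ^ 2) := by simp [EuclideanSpace.norm_eq, e]

end SimpleGraph

section Probability

variable {Ω : Type*} [MeasurableSpace Ω] {μ : Measure Ω}

theorem ProbabilityTheory.HasLaw.memLp_of_gaussianReal {Z : Ω → ℝ} {m : ℝ} {v : NNReal}
    (hZ : HasLaw Z (gaussianReal m v) μ) (p : ENNReal) (hp : p ≠ ⊤) : MemLp Z p μ := by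
  rw [← Function.id_comp Z, ← memLp_map_measure_iff aestronglyMeasurable_id hZ.aemeasurable,
    hZ.map_eq]
  exact memLp_id_gaussianReal' p hp

theorem ofReal_one_sub_le_measure_compl [IsProbabilityMeasure μ] {s : Set Ω} {δ : ℝ}
    (hδ : 0 ≤ δ) (hs : μ s ≤ ENNReal.ofReal δ) : ENNReal.ofReal (1 - δ) ≤ μ sᶜ := by
  rw [ENNReal.ofReal_sub _ hδ, ENNReal.ofReal_one, tsub_le_iff_right]
  calc 1 = μ Set.univ := measure_univ.symm
    _ ≤ μ s + μ sᶜ := measure_univ_le_add_compl s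
    _ ≤ ENNReal.ofReal δ + μ sᶜ := by gcongr
    _ = μ sᶜ + ENNReal.ofReal δ := add_comm _ _

variable [IsFiniteMeasure μ] {ι : Type*} {V : ι → Ω → ℝ} {B t : ℝ}

theorem ProbabilityTheory.iIndepFun.measure_abs_sum_mul_ge_le (hindep : iIndepFun V μ)
    (hL2 : ∀ q, MemLp (V q) 2 μ) (hmean : ∀ q, μ[V q] = 0) (hvar : ∀ q, Var[V q; μ] ≤ B)
    (T : Finset ι) (c : ι → ℝ) (ht : 0 < t) :
    μ {ω | t ≤ |∑ q ∈ T, c q * V q ω|} ≤ ENNReal.ofReal ((∑ q ∈ T, c q ^ 2) * B / t ^ 2) := by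
  have hW : MemLp (∑ q ∈ T, c q • V q) 2 μ := memLp_finsetSum' _ fun q _ => (hL2 q).const_smul _
  have hmeanW : ∫ ω, ∑ q ∈ T, c q * V q ω ∂μ = 0 := by
    rw [integral_finsetSum _ fun q _ => ((hL2 q).integrable one_le_two).const_mul (c q)]
    simp [integral_const_mul, hmean]
  have hvarW : Var[∑ q ∈ T, c q • V q; μ] ≤ (∑ q ∈ T, c q ^ 2) * B := by
    rw [IndepFun.variance_sum (fun q _ => (hL2 q).const_smul _)
      fun q _ r _ hqr => (hindep.indepFun hqr).comp (measurable_const_mul _)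
        (measurable_const_mul _), Finset.sum_mul]
    gcongr with q
    rw [variance_smul]
    exact mul_le_mul_of_nonneg_left (hvar q) (sq_nonneg _)
  have hcheb := meas_ge_le_variance_div_sq hW ht
  simp only [Finset.sum_apply, Pi.smul_apply, smul_eq_mul, hmeanW, sub_zero] at hcheb
  exact hcheb.trans (ENNReal.ofReal_le_ofReal (by gcongr))

theorem ProbabilityTheory.iIndepFun.measure_abs_average_ge_le {κ : Type*} {V : ℕ × κ → Ω → ℝ}
    (hindep : iIndepFun V μ) (hL2 : ∀ q, MemLp (V q) 2 μ) (hmean : ∀ q, μ[V q] = 0)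
    (hvar : ∀ q, Var[V q; μ] ≤ B) (s : Finset κ) (a : κ → ℝ) (P : ℕ) (ht : 0 < t) :
    μ {ω | t ≤ |(P : ℝ)⁻¹ * ∑ p ∈ Finset.range P, ∑ k ∈ s, a k * V (p, k) ω|}
      ≤ ENNReal.ofReal ((∑ k ∈ s, a k ^ 2) * B / t ^ 2 / P) := by
  have hsum : ∀ ω, (P : ℝ)⁻¹ * ∑ p ∈ Finset.range P, ∑ k ∈ s, a k * V (p, k) ω
      = ∑ q ∈ Finset.range P ×ˢ s, (P : ℝ)⁻¹ * a q.2 * V q ω := fun ω => by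
    simp only [Finset.sum_product, Finset.mul_sum, mul_assoc]
  have hcoef : ∑ q ∈ Finset.range P ×ˢ s, ((P : ℝ)⁻¹ * a q.2) ^ 2
      = (∑ k ∈ s, a k ^ 2) / P := by
    simp only [Finset.sum_product, mul_pow, ← Finset.mul_sum, Finset.sum_const,
      Finset.card_range, nsmul_eq_mul]
    field_simp
  simp_rw [hsum]
  refine (hindep.measure_abs_sum_mul_ge_le hL2 hmean hvar _ _ ht).trans_eq ?_
  rw [hcoef, div_mul_eq_mul_div, div_div, div_div, mul_comm (P : ℝ)]

theorem ProbabilityTheory.iIndepFun.measure_abs_average_ge_le_of_gaussianReal {κ : Type*}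
    {V : ℕ × κ → Ω → ℝ} (hindep : iIndepFun V μ) (hV : ∀ q, AEMeasurable (V q) μ)
    (hgauss : ∀ q, ∃ σ : NNReal, (σ : ℝ) ≤ B ∧ μ.map (V q) = gaussianReal 0 σ)
    (s : Finset κ) (a : κ → ℝ) (P : ℕ) (ht : 0 < t) :
    μ {ω | t ≤ |(P : ℝ)⁻¹ * ∑ p ∈ Finset.range P, ∑ k ∈ s, a k * V (p, k) ω|}
      ≤ ENNReal.ofReal ((∑ k ∈ s, a k ^ 2) * B / t ^ 2 / P) := by
  choose σ hσ hlaw using hgauss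
  have hV : ∀ q, HasLaw (V q) (gaussianReal 0 (σ q)) μ := fun q => ⟨hV q, hlaw q⟩
  refine hindep.measure_abs_average_ge_le (fun q => (hV q).memLp_of_gaussianReal 2 (by simp))
    (fun q => (hV q).integral_eq.trans integral_id_gaussianReal) (fun q => ?_) s a P ht
  exact ((hV q).variance_eq.trans variance_id_gaussianReal).trans_le (hσ q)

end Probability

theorem Matrix.eq_pow_mulVec_add_sum_of_succ {n R : Type*} [Fintype n] [DecidableEq n]
    [Semiring R] (M : Matrix n n R) {x u : ℕ → n → R}
    (hx : ∀ i, x (i + 1) = M *ᵥ x i + u i) (i : ℕ) :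
    x i = M ^ i *ᵥ x 0 + ∑ j ∈ Finset.range i, M ^ (i - 1 - j) *ᵥ u j := by
  induction i with
  | zero => simp
  | succ i ih =>
    rw [hx, ih, mulVec_add, mulVec_mulVec, ← pow_succ', mulVec_sum, Finset.sum_range_succ,
      Nat.add_sub_cancel, Nat.sub_self, pow_zero, one_mulVec, add_assoc]
    congr 2
    refine Finset.sum_congr rfl fun j hj => ?_
    rw [mulVec_mulVec, ← pow_succ', show i - 1 - j + 1 = i - j by
      have := Finset.mem_range.1 hj; omega]

section NoisyConsensus

variable {V : Type*} [Fintype V] [DecidableEq V] (G : SimpleGraph V) [DecidableRel G.Adj]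

/-- The gain from the noise `v_{mk}(j)` on the link `m → k`, indexed by `q = (j, m, k)`,
to the state `x_l(i)` of the iteration with matrix `M` and link weight `α`. -/
def noiseGain (M : Matrix V V ℝ) (α : ℝ) (i : ℕ) (l : V) (q : ℕ × V × V) : ℝ :=
  if G.Adj q.2.1 q.2.2 then α * (M ^ (i - 1 - q.1)) l q.2.1 else 0

variable {L : Matrix V V ℝ} {α : ℝ}

theorem apply_eq_pow_mulVec_add_sum_noiseGain {x nz : ℕ → V → ℝ} {w : ℕ → V → V → ℝ}
    (hn : ∀ i l, nz i l = -∑ k, if G.Adj l k then w i l k else 0)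
    (hx : ∀ i, x (i + 1) = x i - α • (L *ᵥ x i + nz i)) (i : ℕ) (l : V) :
    x i l = ((1 - α • L) ^ i *ᵥ x 0) l
      + ∑ q ∈ Finset.range i ×ˢ Finset.univ ×ˢ Finset.univ,
          noiseGain G (1 - α • L) α i l q * w q.1 q.2.1 q.2.2 := by
  have hstep : ∀ i, x (i + 1) = (1 - α • L) *ᵥ x i + -α • nz i := fun i => by
    rw [hx, sub_mulVec, one_mulVec, smul_mulVec, smul_add, neg_smul]
    abel
  rw [(1 - α • L).eq_pow_mulVec_add_sum_of_succ hstep i]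
  simp [Finset.sum_apply, mulVec, dotProduct, hn, Finset.sum_product, Fintype.sum_prod_type,
    noiseGain, Finset.mul_sum, mul_left_comm, mul_assoc]

theorem average_apply_eq_pow_mulVec_add_average_noise {x nz : ℕ → ℕ → V → ℝ}
    {w : ℕ → ℕ → V → V → ℝ} {x₀ : V → ℝ} (h0 : ∀ p, x p 0 = x₀)
    (hn : ∀ p i l, nz p i l = -∑ k, if G.Adj l k then w p i l k else 0)
    (hx : ∀ p i, x p (i + 1) = x p i - α • (L *ᵥ x p i + nz p i)) {P : ℕ} (hP : P ≠ 0)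
    (i : ℕ) (l : V) :
    (P : ℝ)⁻¹ * ∑ p ∈ Finset.range P, x p i l = ((1 - α • L) ^ i *ᵥ x₀) l
      + (P : ℝ)⁻¹ * ∑ p ∈ Finset.range P, ∑ q ∈ Finset.range i ×ˢ Finset.univ ×ˢ Finset.univ,
          noiseGain G (1 - α • L) α i l q * w p q.1 q.2.1 q.2.2 := by
  simp only [apply_eq_pow_mulVec_add_sum_noiseGain G (hn _) (hx _), h0, Finset.sum_add_distrib,
    Finset.sum_const, Finset.card_range, nsmul_eq_mul]
  field_simp

end NoisyConsensus

theorem ANC_realizability_general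
    {N : ℕ}
    {Ω : Type*} [MeasurableSpace Ω] {μ : Measure Ω} [IsProbabilityMeasure μ]
    -- the fixed connected graph and its Laplacian L = D − A
    (G : SimpleGraph (Fin N)) [DecidableRel G.Adj] (hconn : G.Connected)
    (L : Matrix (Fin N) (Fin N) ℝ)
    (hLdef : ∀ k l, L k l =
      if k = l then (G.degree k : ℝ) else if G.Adj k l then -1 else 0)
    -- channel noise: independent zero-mean Gaussian, variances bounded by μ₀ < ∞
    (v : ℕ → ℕ → Ω → Fin N → Fin N → ℝ)
    (hvmeas : ∀ p i, Measurable (v p i))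
    (μ0 : ℝ)
    (hgauss : ∀ p i k l, ∃ s : NNReal, (s : ℝ) ≤ μ0 ∧
      Measure.map (fun ω => v p i ω k l) μ = gaussianReal 0 s)
    (hvindep : iIndepFun
      (fun q : ℕ × ℕ × Fin N × Fin N => fun ω => v q.1 q.2.1 ω q.2.2.1 q.2.2.2) μ)
    -- noise vectors: n^p_l(i) = −Σ_{k ∈ Ω_l} v^p_{lk}(i)
    (n : ℕ → ℕ → Ω → Fin N → ℝ)
    (hn : ∀ p i ω l, n p i ω l = - ∑ k, if G.Adj l k then v p i ω l k else 0)
    -- constant link weight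
    (α : ℝ) (hα0 : 0 < α) (hα1 : α < 2 / lambdaN L)
    -- the A-NC runs, for each initial state x0
    (X : (Fin N → ℝ) → ℕ → ℕ → Ω → Fin N → ℝ)
    (hX0 : ∀ x0 p ω, X x0 p 0 ω = x0)
    (hXrec : ∀ x0 p i ω, X x0 p (i + 1) ω
      = X x0 p i ω - α • (L.mulVec (X x0 p i ω) + n p i ω))
    (K ε δ : ℝ) (hK : 0 < K) (hε : 0 < ε) (hδ : 0 < δ) :
    ∃ ihat phat : ℕ, 1 ≤ ihat ∧ 1 ≤ phat ∧
      ∀ x0 : Fin N → ℝ,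
        Real.sqrt (∑ k, (x0 k - (∑ j, x0 j) / N) ^ 2) ≤ K →
        ∀ l : Fin N,
          ENNReal.ofReal (1 - δ) ≤
            μ {ω | |(phat : ℝ)⁻¹ * (∑ p ∈ Finset.range phat, X x0 p ihat ω l)
                      - (∑ j, x0 j) / N| / K ≤ ε} := by
  have hL : L = G.lapMatrix ℝ := by ext k l; rw [hLdef, G.lapMatrix_apply]
  subst hL
  obtain ⟨ρ, hρ0, hρ1, hρ⟩ := hconn.exists_abs_pow_mulVec_sub_average_le hα0 hα1
  set t := K * ε / 2 with ht_def
  have ht : 0 < t := by positivity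
  obtain ⟨ihat, hi1, hiρ⟩ := ((eventually_ge_atTop 1).and
    ((tendsto_pow_atTop_nhds_zero_of_lt_one hρ0 hρ1).eventually (ge_mem_nhds (half_pos hε)))).exists
  set M := 1 - α • G.lapMatrix ℝ
  set s := Finset.range ihat ×ˢ (Finset.univ : Finset (Fin N)) ×ˢ (Finset.univ : Finset (Fin N))
  set C := ∑ l, ∑ q ∈ s, noiseGain G M α ihat l q ^ 2
  obtain ⟨phat, hp1, hp⟩ := ((eventually_ge_atTop 1).and
    ((tendsto_const_div_atTop_nhds_zero_nat (C * μ0 / t ^ 2)).eventually (ge_mem_nhds hδ))).exists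
  refine ⟨ihat, phat, hi1, hp1, fun x0 hx0 l => ?_⟩
  have hdet : |(M ^ ihat *ᵥ x0) l - (∑ j, x0 j) / N| ≤ t := (hρ ihat x0 l).trans <|
    (mul_le_mul hiρ hx0 (Real.sqrt_nonneg _) (half_pos hε).le).trans_eq (by rw [ht_def]; ring)
  have hμ0 : 0 ≤ μ0 := (hgauss 0 0 l l).elim fun σ h => σ.2.trans h.1
  have hnoise := hvindep.measure_abs_average_ge_le_of_gaussianReal
    (fun q => by have := hvmeas q.1 q.2.1; fun_prop)
    (fun q => hgauss q.1 q.2.1 q.2.2.1 q.2.2.2) s (noiseGain G M α ihat l) phat ht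
  refine (ofReal_one_sub_le_measure_compl hδ.le (hnoise.trans (ENNReal.ofReal_le_ofReal
    (le_trans ?_ hp)))).trans (measure_mono fun ω hω => ?_)
  · gcongr
    exact Finset.single_le_sum (f := fun l => ∑ q ∈ s, noiseGain G M α ihat l q ^ 2)
      (fun _ _ => Finset.sum_nonneg fun _ _ => sq_nonneg _) (Finset.mem_univ l)
  have havg := average_apply_eq_pow_mulVec_add_average_noise G (x := fun p i => X x0 p i ω)
    (fun p => hX0 x0 p ω) (fun p i l => hn p i ω l) (fun p i => hXrec x0 p i ω)
    (by omega : phat ≠ 0) ihat l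
  simp only [Set.mem_compl_iff, Set.mem_ofPred_eq, not_le] at hω havg ⊢
  rw [havg, add_sub_right_comm, div_le_iff₀ hK]
  exact (abs_add_le _ _).trans (by linarith)

/-- Realizability of A-NC: on a fixed connected graph with independent
zero-mean Gaussian channel noise of uniformly bounded variance, for every
constant link weight `0 < α < 2/λ_N(L)` and every `0 < ε, δ < 1` there is a
pair `(î, p̂)` of iteration/run counts for which the Monte Carlo estimate is
within `Kε` of the initial average with probability at least `1 − δ`,
uniformly over initial states in `𝒦` and over coordinates; i.e.,
`(ε,δ)`-consensus is achievable and `T^α(ε,δ) < ∞`. -/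
theorem ANC_realizability
    {N : ℕ} (hN : 0 < N)
    {Ω : Type*} [MeasurableSpace Ω] {μ : Measure Ω} [IsProbabilityMeasure μ]
    -- the fixed connected graph and its Laplacian L = D − A
    (G : SimpleGraph (Fin N)) [DecidableRel G.Adj] (hconn : G.Connected)
    (L : Matrix (Fin N) (Fin N) ℝ)
    (hLdef : ∀ k l, L k l =
      if k = l then (G.degree k : ℝ) else if G.Adj k l then -1 else 0)
    -- channel noise: independent zero-mean Gaussian, variances bounded by μ₀ < ∞
    (v : ℕ → ℕ → Ω → Fin N → Fin N → ℝ)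
    (hvmeas : ∀ p i, Measurable (v p i))
    (μ0 : ℝ)
    (hgauss : ∀ p i k l, ∃ s : NNReal, (s : ℝ) ≤ μ0 ∧
      Measure.map (fun ω => v p i ω k l) μ = gaussianReal 0 s)
    (hvindep : iIndepFun
      (fun q : ℕ × ℕ × Fin N × Fin N => fun ω => v q.1 q.2.1 ω q.2.2.1 q.2.2.2) μ)
    -- noise vectors: n^p_l(i) = −Σ_{k ∈ Ω_l} v^p_{lk}(i)
    (n : ℕ → ℕ → Ω → Fin N → ℝ)
    (hn : ∀ p i ω l, n p i ω l = - ∑ k, if G.Adj l k then v p i ω l k else 0)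
    -- constant link weight
    (α : ℝ) (hα0 : 0 < α) (hα1 : α < 2 / lambdaN L)
    -- the A-NC runs, for each initial state x0
    (X : (Fin N → ℝ) → ℕ → ℕ → Ω → Fin N → ℝ)
    (hX0 : ∀ x0 p ω, X x0 p 0 ω = x0)
    (hXrec : ∀ x0 p i ω, X x0 p (i + 1) ω
      = X x0 p i ω - α • (L.mulVec (X x0 p i ω) + n p i ω))
    (K ε δ : ℝ) (hK : 0 < K) (hε : 0 < ε) (hε1 : ε < 1) (hδ : 0 < δ) (hδ1 : δ < 1) :
    ∃ ihat phat : ℕ, 1 ≤ ihat ∧ 1 ≤ phat ∧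
      ∀ x0 : Fin N → ℝ,
        Real.sqrt (∑ k, (x0 k - (∑ j, x0 j) / N) ^ 2) ≤ K →
        ∀ l : Fin N,
          ENNReal.ofReal (1 - δ) ≤
            μ {ω | |(phat : ℝ)⁻¹ * (∑ p ∈ Finset.range phat, X x0 p ihat ω l)
                      - (∑ j, x0 j) / N| / K ≤ ε} :=
  ANC_realizability_general G hconn L hLdef v hvmeas μ0 hgauss hvindep n hn α hα0 hα1 X hX0 hXrec K
    ε δ hK hε hδ
end
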